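/- arXiv:quant-ph/0604023 — 4 statements merged into one kernel-verified Lean document; each statement's English description precedes it below -/
import Mathlib

section
/- Let q ∈ ℝ³ with ‖q‖ < 1. Then for every p ∈ ℝ³ with ‖p‖ = 1 one has φ_{−q}(φ_q(p)) = p and φ_q(φ_{−q}(p)) = p; in particular φ_q is a bijection of the unit sphere S² onto itself with inverse φ_{−q}. -/
/-!
The denominator of `φ_{-q}` at `φ_q p` is explicit:
`1 + ‖q‖² - 2⟪q, φ_q p⟫ = (1 - ‖q‖²)² / (1 + ‖q‖² + 2⟪q, p⟫)`, for every `p` at which `φ_q` has a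
nonzero denominator. With it, `φ_{-q} (φ_q p) = p` is a linear-combination check. On the sphere the
denominator is at least `(1 - ‖q‖)² > 0` by Cauchy–Schwarz, and `φ_q` preserves the sphere because
its numerator has the same norm as its denominator.
-/

noncomputable def phiMap (q p : EuclideanSpace ℝ (Fin 3)) : EuclideanSpace ℝ (Fin 3) :=
  (1 + ‖q‖ ^ 2 + 2 * (inner ℝ q p : ℝ))⁻¹ •
    ((1 - ‖q‖ ^ 2) • p + (2 * (1 + (inner ℝ q p : ℝ))) • q)

open scoped RealInnerProductSpace

section
variable {q p : EuclideanSpace ℝ (Fin 3)}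

lemma phiMap_denom_pos (hq : ‖q‖ ≠ 1) (hp : ‖p‖ = 1) : 0 < 1 + ‖q‖ ^ 2 + 2 * ⟪q, p⟫ := by
  have h := neg_le_of_abs_le (abs_real_inner_le_norm q p)
  rw [hp, mul_one] at h
  nlinarith [sq_pos_of_ne_zero (sub_ne_zero.mpr hq)]

lemma one_sub_inner_phiMap (hD : 1 + ‖q‖ ^ 2 + 2 * ⟪q, p⟫ ≠ 0) :
    1 - ⟪q, phiMap q p⟫ = (1 - ‖q‖ ^ 2) * (1 + ⟪q, p⟫) / (1 + ‖q‖ ^ 2 + 2 * ⟪q, p⟫) := by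
  simp only [phiMap, real_inner_smul_right, inner_add_right, real_inner_self_eq_norm_sq]
  field_simp
  ring

lemma phiMap_neg_denom (hD : 1 + ‖q‖ ^ 2 + 2 * ⟪q, p⟫ ≠ 0) :
    1 + ‖-q‖ ^ 2 + 2 * ⟪-q, phiMap q p⟫ = (1 - ‖q‖ ^ 2) ^ 2 / (1 + ‖q‖ ^ 2 + 2 * ⟪q, p⟫) := by
  rw [norm_neg, inner_neg_left, ← sub_eq_iff_eq_add'.mpr (one_sub_inner_phiMap hD).symm]
  field_simp
  ring

lemma phiMap_neg_phiMap (hq : ‖q‖ ≠ 1) (hD : 1 + ‖q‖ ^ 2 + 2 * ⟪q, p⟫ ≠ 0) :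
    phiMap (-q) (phiMap q p) = p := by
  have hq2 : 1 - ‖q‖ ^ 2 ≠ 0 := by
    rw [sub_ne_zero, ne_comm, ne_eq, pow_eq_one_iff_of_nonneg (norm_nonneg q) two_ne_zero]
    exact hq
  have numerator_eq : (1 - ‖q‖ ^ 2) • phiMap q p + (2 * (1 - ⟪q, phiMap q p⟫)) • (-q) =
      ((1 - ‖q‖ ^ 2) ^ 2 / (1 + ‖q‖ ^ 2 + 2 * ⟪q, p⟫)) • p := by
    rw [one_sub_inner_phiMap hD, phiMap]
    match_scalars <;> field_simp
    ring
  rw [phiMap, phiMap_neg_denom hD, norm_neg, inner_neg_left, ← sub_eq_add_neg, numerator_eq,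
    smul_smul, inv_mul_cancel₀ (div_ne_zero (pow_ne_zero 2 hq2) hD), one_smul]

lemma norm_phiMap (hp : ‖p‖ = 1) (hD : 1 + ‖q‖ ^ 2 + 2 * ⟪q, p⟫ ≠ 0) : ‖phiMap q p‖ = 1 := by
  have numerator_norm_sq :
      ‖(1 - ‖q‖ ^ 2) • p + (2 * (1 + ⟪q, p⟫)) • q‖ ^ 2 = (1 + ‖q‖ ^ 2 + 2 * ⟪q, p⟫) ^ 2 := by
    rw [← real_inner_self_eq_norm_sq]
    simp only [inner_add_left, inner_add_right, real_inner_smul_left, real_inner_smul_right]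
    rw [real_inner_self_eq_norm_sq, real_inner_self_eq_norm_sq, real_inner_comm p q, hp]
    ring
  rw [sq_eq_sq_iff_abs_eq_abs, abs_norm] at numerator_norm_sq
  rw [phiMap, norm_smul, numerator_norm_sq, Real.norm_eq_abs, abs_inv,
    inv_mul_cancel₀ (abs_ne_zero.mpr hD)]
end

theorem phi_neg_q_is_inverse (q : EuclideanSpace ℝ (Fin 3)) (hq : ‖q‖ < 1) :
    (∀ p : EuclideanSpace ℝ (Fin 3), ‖p‖ = 1 →
      phiMap (-q) (phiMap q p) = p ∧ phiMap q (phiMap (-q) p) = p) ∧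
    Set.BijOn (phiMap q) {p : EuclideanSpace ℝ (Fin 3) | ‖p‖ = 1}
      {p : EuclideanSpace ℝ (Fin 3) | ‖p‖ = 1} ∧
    Set.InvOn (phiMap (-q)) (phiMap q) {p : EuclideanSpace ℝ (Fin 3) | ‖p‖ = 1}
      {p : EuclideanSpace ℝ (Fin 3) | ‖p‖ = 1} := by
  have hq₁ : ‖q‖ ≠ 1 := hq.ne
  have hnq₁ : ‖-q‖ ≠ 1 := by rwa [norm_neg]
  have maps (r : EuclideanSpace ℝ (Fin 3)) (hr : ‖r‖ ≠ 1) :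
      Set.MapsTo (phiMap r) {p | ‖p‖ = 1} {p | ‖p‖ = 1} := fun p hp =>
    norm_phiMap hp (phiMap_denom_pos hr hp).ne'
  have inv : Set.InvOn (phiMap (-q)) (phiMap q) {p | ‖p‖ = 1} {p | ‖p‖ = 1} := by
    refine ⟨fun p hp => phiMap_neg_phiMap hq₁ (phiMap_denom_pos hq₁ hp).ne', fun p hp => ?_⟩
    simpa only [neg_neg] using phiMap_neg_phiMap hnq₁ (phiMap_denom_pos hnq₁ hp).ne'
  exact ⟨fun p hp => ⟨inv.1 hp, inv.2 hp⟩, inv.bijOn (maps q hq₁) (maps (-q) hnq₁), inv⟩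
end

section
/- Let q ∈ ℝ³ with ‖q‖ < 1 and x ∈ ℝ³ with ‖x‖ = 1. Then the following identity of complex 2×2 matrices holds: (I + σ(q))(I + σ(x))(I + σ(q)) = (1 + ‖q‖² + 2⟨q,x⟩) · (I + σ(φ_q(x))). That is, the Lorentz boost P(q) = I + σ(q) acts on null directions exactly by the Möbius map φ_q of the sphere, with place-dependent scalar factor λ(q,x) proportional to 1 + ‖q‖² + 2⟨q,x⟩. -/
/-! The Pauli matrices satisfy the Clifford relation `σ(x)σ(y) + σ(y)σ(x) = 2⟨x, y⟩ I`, so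
`σ(q)σ(x)σ(q) = 2⟨q, x⟩σ(q) - ‖q‖²σ(x)` and expanding the product gives, for arbitrary `q, x`,
the scalar `1 + ‖q‖² + 2⟨q, x⟩` plus `σ` of the numerator of `φ_q(x)`. Dividing by the scalar is
harmless: for `‖x‖ = 1` it equals `‖q + x‖²`, which vanishes only at `q = -x`, where the numerator
of `φ_q(x)` vanishes too. -/

open Matrix

noncomputable def pauliSigma (x : EuclideanSpace ℝ (Fin 3)) : Matrix (Fin 2) (Fin 2) ℂ :=
  (x 0 : ℂ) • !![0, 1; 1, 0] + (x 1 : ℂ) • !![0, -Complex.I; Complex.I, 0] +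
    (x 2 : ℂ) • !![1, 0; 0, -1]

lemma pauliSigma_add (x y : EuclideanSpace ℝ (Fin 3)) :
    pauliSigma (x + y) = pauliSigma x + pauliSigma y := by
  simp only [pauliSigma, PiLp.add_apply, Complex.ofReal_add, add_smul]
  abel

lemma pauliSigma_smul (c : ℝ) (x : EuclideanSpace ℝ (Fin 3)) :
    pauliSigma (c • x) = (c : ℂ) • pauliSigma x := by
  simp only [pauliSigma, PiLp.smul_apply, smul_eq_mul, Complex.ofReal_mul, smul_add, mul_smul]

lemma pauliSigma_anticomm (x y : EuclideanSpace ℝ (Fin 3)) :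
    pauliSigma x * pauliSigma y + pauliSigma y * pauliSigma x =
      ((2 * inner ℝ x y : ℝ) : ℂ) • 1 := by
  have hxy : inner ℝ x y = x 0 * y 0 + x 1 * y 1 + x 2 * y 2 := by
    simp [PiLp.inner_apply, Fin.sum_univ_three, mul_comm]
  rw [hxy]
  ext i j
  fin_cases i <;> fin_cases j <;> simp [pauliSigma] <;> ring_nf <;> simp [Complex.I_sq]

lemma pauliSigma_mul_self (x : EuclideanSpace ℝ (Fin 3)) :
    pauliSigma x * pauliSigma x = ((‖x‖ ^ 2 : ℝ) : ℂ) • 1 := by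
  have h := pauliSigma_anticomm x x
  rw [real_inner_self_eq_norm_sq, ← two_smul ℂ, Complex.ofReal_mul, Complex.ofReal_ofNat,
    mul_smul] at h
  exact smul_right_injective _ two_ne_zero h

lemma pauliSigma_mul_mul_self (x y : EuclideanSpace ℝ (Fin 3)) :
    pauliSigma x * pauliSigma y * pauliSigma x =
      ((2 * inner ℝ x y : ℝ) : ℂ) • pauliSigma x - ((‖x‖ ^ 2 : ℝ) : ℂ) • pauliSigma y := by
  rw [mul_assoc, eq_sub_of_add_eq (pauliSigma_anticomm y x), mul_sub, mul_smul_comm, mul_one,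
    ← mul_assoc, pauliSigma_mul_self, smul_mul_assoc, one_mul, real_inner_comm]

lemma one_add_pauliSigma_sandwich (a b : EuclideanSpace ℝ (Fin 3)) :
    (1 + pauliSigma a) * (1 + pauliSigma b) * (1 + pauliSigma a) =
      ((1 + ‖a‖ ^ 2 + 2 * inner ℝ a b : ℝ) : ℂ) • 1 +
        pauliSigma ((1 - ‖a‖ ^ 2) • b + (2 * (1 + inner ℝ a b)) • a) := by
  have hexpand : (1 + pauliSigma a) * (1 + pauliSigma b) * (1 + pauliSigma a) =
      1 + 2 • pauliSigma a + pauliSigma a * pauliSigma a + pauliSigma b +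
        (pauliSigma a * pauliSigma b + pauliSigma b * pauliSigma a) +
        pauliSigma a * pauliSigma b * pauliSigma a := by
    noncomm_ring
  rw [hexpand, pauliSigma_mul_self, pauliSigma_anticomm, pauliSigma_mul_mul_self, pauliSigma_add,
    pauliSigma_smul, pauliSigma_smul]
  push_cast
  module

lemma smul_phiMap_of_norm_eq_one (q : EuclideanSpace ℝ (Fin 3)) {x : EuclideanSpace ℝ (Fin 3)}
    (hx : ‖x‖ = 1) :
    (1 + ‖q‖ ^ 2 + 2 * inner ℝ q x) • phiMap q x =
      (1 - ‖q‖ ^ 2) • x + (2 * (1 + inner ℝ q x)) • q := by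
  by_cases hD : 1 + ‖q‖ ^ 2 + 2 * inner ℝ q x = 0
  · have hqx : q = -x := by
      rw [eq_neg_iff_add_eq_zero, ← norm_eq_zero, ← sq_eq_zero_iff, norm_add_sq_real, hx]
      linarith
    subst hqx
    norm_num [hx, inner_neg_left]
  · exact smul_inv_smul₀ hD _

theorem boost_acts_as_moebius_general (q x : EuclideanSpace ℝ (Fin 3))
    (hx : ‖x‖ = 1) :
    (1 + pauliSigma q) * (1 + pauliSigma x) * (1 + pauliSigma q) =
      ((1 + ‖q‖ ^ 2 + 2 * (inner ℝ q x : ℝ) : ℝ) : ℂ) • (1 + pauliSigma (phiMap q x)) := by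
  rw [one_add_pauliSigma_sandwich, ← smul_phiMap_of_norm_eq_one q hx, pauliSigma_smul, smul_add]

theorem boost_acts_as_moebius (q x : EuclideanSpace ℝ (Fin 3))
    (hq : ‖q‖ < 1) (hx : ‖x‖ = 1) :
    (1 + pauliSigma q) * (1 + pauliSigma x) * (1 + pauliSigma q) =
      ((1 + ‖q‖ ^ 2 + 2 * (inner ℝ q x : ℝ) : ℝ) : ℂ) • (1 + pauliSigma (phiMap q x)) :=
  boost_acts_as_moebius_general q x hx
end

section
/- Let q ∈ ℝ³ with ‖q‖ < 1 and let x ∈ ℝ³ with ‖x‖ = 1. Then for every tangent vector u to the sphere at x (i.e. u ∈ ℝ³ with ⟨u,x⟩ = 0), the Fréchet derivative of φ_q at x satisfies ‖Dφ_q(x)·u‖ = ((1−‖q‖²)/(1+‖q‖²+2⟨q,x⟩)) · ‖u‖. Consequently φ_q is a conformal map of S²: for tangent vectors u, v at x, ⟨Dφ_q(x)·u, Dφ_q(x)·v⟩ = ((1−‖q‖²)/(1+‖q‖²+2⟨q,x⟩))² ⟨u,v⟩, so angles between tangent vectors are preserved, and the spherical area element transforms by dS′/dS = (1−‖q‖²)²/(1+‖q‖²+2⟨q,x⟩)².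 -/
open scoped RealInnerProductSpace

theorem add_ne_zero_of_norm_lt_norm {E : Type*} [SeminormedAddCommGroup E] {q x : E}
    (h : ‖q‖ < ‖x‖) : q + x ≠ 0 := by
  intro hqx
  rw [eq_neg_of_add_eq_zero_left hqx, norm_neg] at h
  exact lt_irrefl _ h

section InnerProductSpace

variable {E : Type*} [NormedAddCommGroup E] [InnerProductSpace ℝ E]

theorem norm_add_sq_of_norm_eq_one (q : E) {x : E} (hx : ‖x‖ = 1) :
    ‖q + x‖ ^ 2 = 1 + ‖q‖ ^ 2 + 2 * ⟪q, x⟫ := by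
  rw [norm_add_sq_real, hx]
  ring

theorem reflection_orthogonal_singleton_apply (w u : E) :
    (ℝ ∙ w)ᗮ.reflection u = u - (2 * ⟪w, u⟫ / ‖w‖ ^ 2) • w := by
  rw [Submodule.reflection_orthogonal_apply, Submodule.reflection_singleton_apply]
  simp only [RCLike.ofReal_real_eq_id, id]
  module

end InnerProductSpace

local notation "E3" => EuclideanSpace ℝ (Fin 3)

theorem hasFDerivAt_phiMap (q : E3) {x : E3} (hx : ‖x‖ = 1) (hqx : q + x ≠ 0) :
    HasFDerivAt (phiMap q)
      (((1 - ‖q‖ ^ 2) / ‖q + x‖ ^ 2) • (ContinuousLinearMap.id ℝ E3 -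
        ((2 / ‖q + x‖ ^ 2) • innerSL ℝ q).smulRight (q + x))) x := by
  have hden : HasFDerivAt (fun p : E3 => 1 + ‖q‖ ^ 2 + 2 * ⟪q, p⟫) ((2 : ℝ) • innerSL ℝ q) x := by
    simpa using ((innerSL ℝ q).hasFDerivAt (x := x)).const_mul (2 : ℝ) |>.const_add (1 + ‖q‖ ^ 2)
  have hcoef : HasFDerivAt (fun p : E3 => 2 * (1 + ⟪q, p⟫)) ((2 : ℝ) • innerSL ℝ q) x := by
    simpa using ((innerSL ℝ q).hasFDerivAt (x := x)).const_add 1 |>.const_mul (2 : ℝ)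
  have hnum : HasFDerivAt (fun p : E3 => (1 - ‖q‖ ^ 2) • p + (2 * (1 + ⟪q, p⟫)) • q)
      ((1 - ‖q‖ ^ 2) • ContinuousLinearMap.id ℝ E3 + ((2 : ℝ) • innerSL ℝ q).smulRight q) x :=
    ((hasFDerivAt_id x).const_smul (1 - ‖q‖ ^ 2)).add (hcoef.smul_const q)
  have hden_ne : 1 + ‖q‖ ^ 2 + 2 * ⟪q, x⟫ ≠ 0 := by
    rw [← norm_add_sq_of_norm_eq_one q hx]
    exact pow_ne_zero 2 (norm_ne_zero_iff.2 hqx)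
  refine (((hasDerivAt_inv hden_ne).comp_hasFDerivAt x hden).smul hnum).congr_fderiv ?_
  refine ContinuousLinearMap.ext fun u => ?_
  rw [norm_add_sq_of_norm_eq_one q hx]
  simp only [Function.comp_apply, add_apply, smul_apply, sub_apply, ContinuousLinearMap.id_apply,
    ContinuousLinearMap.smulRight_apply, coe_innerSL_apply, smul_eq_mul]
  match_scalars
  · field_simp
  · field_simp
    ring
  · field_simp

theorem fderiv_phiMap_apply_of_inner_eq_zero (q : E3) {x u : E3} (hx : ‖x‖ = 1)
    (hqx : q + x ≠ 0) (hu : ⟪u, x⟫ = 0) :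
    fderiv ℝ (phiMap q) x u = ((1 - ‖q‖ ^ 2) / ‖q + x‖ ^ 2) • (ℝ ∙ (q + x))ᗮ.reflection u := by
  have hqu : ⟪q, u⟫ = ⟪q + x, u⟫ := by rw [inner_add_left, real_inner_comm u x, hu, add_zero]
  rw [(hasFDerivAt_phiMap q hx hqx).fderiv, reflection_orthogonal_singleton_apply]
  simp [hqu, mul_div_right_comm]

theorem phi_is_conformal (q x : EuclideanSpace ℝ (Fin 3))
    (hq : ‖q‖ < 1) (hx : ‖x‖ = 1) :
    (∀ u : EuclideanSpace ℝ (Fin 3), (inner ℝ u x : ℝ) = 0 →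
      ‖fderiv ℝ (phiMap q) x u‖ =
        ((1 - ‖q‖ ^ 2) / (1 + ‖q‖ ^ 2 + 2 * (inner ℝ q x : ℝ))) * ‖u‖) ∧
    (∀ u v : EuclideanSpace ℝ (Fin 3), (inner ℝ u x : ℝ) = 0 → (inner ℝ v x : ℝ) = 0 →
      (inner ℝ (fderiv ℝ (phiMap q) x u) (fderiv ℝ (phiMap q) x v) : ℝ) =
        ((1 - ‖q‖ ^ 2) / (1 + ‖q‖ ^ 2 + 2 * (inner ℝ q x : ℝ))) ^ 2 * (inner ℝ u v : ℝ)) := by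
  have hqx : q + x ≠ 0 := add_ne_zero_of_norm_lt_norm (hx ▸ hq)
  have hD (u : E3) (hu : ⟪u, x⟫ = 0) := fderiv_phiMap_apply_of_inner_eq_zero q hx hqx hu
  have hscale : 0 ≤ (1 - ‖q‖ ^ 2) / ‖q + x‖ ^ 2 := by
    have : ‖q‖ ^ 2 < 1 := by nlinarith [norm_nonneg q]
    positivity
  rw [← norm_add_sq_of_norm_eq_one q hx]
  refine ⟨fun u hu => ?_, fun u v hu hv => ?_⟩
  · rw [hD u hu, norm_smul, Real.norm_of_nonneg hscale, LinearIsometryEquiv.norm_map]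
  · rw [hD u hu, hD v hv, real_inner_smul_left, real_inner_smul_right,
      LinearIsometryEquiv.inner_map_map]
    ring
end

section
/- Let p, q ∈ ℝ³ with ‖p‖ < 1 and ‖q‖ < 1. Then the Möbius transformations φ_p and φ_q commute on the sphere, i.e. φ_p(φ_q(x)) = φ_q(φ_p(x)) for all x ∈ S², if and only if p and q are linearly dependent (p × q = 0, i.e. p and q are parallel or antiparallel). -/
open scoped RealInnerProductSpace

theorem one_add_inner_pos {E : Type*} [NormedAddCommGroup E] [InnerProductSpace ℝ E] {u v : E}
    (hu : ‖u‖ < 1) (hv : ‖v‖ ≤ 1) : 0 < 1 + ⟪u, v⟫ := by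
  have hle : ‖u‖ * ‖v‖ < 1 := by nlinarith [norm_nonneg u, norm_nonneg v]
  linarith [neg_abs_le ⟪u, v⟫, abs_real_inner_le_norm u v]

local notation "ℝ³" => EuclideanSpace ℝ (Fin 3)

noncomputable def phiDenom (q x : ℝ³) : ℝ := 1 + ‖q‖ ^ 2 + 2 * ⟪q, x⟫

section
variable {q x : ℝ³}

theorem phiMap_eq (q x : ℝ³) :
    phiMap q x = (phiDenom q x)⁻¹ • ((1 - ‖q‖ ^ 2) • x + (2 * (1 + ⟪q, x⟫)) • q) := rfl

theorem phiDenom_eq_norm_add_sq (hx : ‖x‖ = 1) : phiDenom q x = ‖q + x‖ ^ 2 := by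
  rw [phiDenom, norm_add_sq_real, hx]
  ring

theorem phiDenom_pos (hq : ‖q‖ < 1) (hx : ‖x‖ = 1) : 0 < phiDenom q x := by
  rw [phiDenom_eq_norm_add_sq hx]
  have : q + x ≠ 0 := by
    intro h
    rw [add_eq_zero_iff_eq_neg.1 h, norm_neg] at hq
    linarith
  positivity

theorem norm_phiMap_s15 (hq : ‖q‖ < 1) (hx : ‖x‖ = 1) : ‖phiMap q x‖ = 1 := by
  have hD := phiDenom_pos hq hx
  have hsq : ‖(1 - ‖q‖ ^ 2) • x + (2 * (1 + ⟪q, x⟫)) • q‖ ^ 2 = phiDenom q x ^ 2 := by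
    rw [norm_add_sq_real, norm_smul, norm_smul, mul_pow, mul_pow, Real.norm_eq_abs,
      Real.norm_eq_abs, sq_abs, sq_abs, real_inner_smul_left, real_inner_smul_right,
      real_inner_comm q x, hx, phiDenom]
    ring
  rw [phiMap_eq, norm_smul, norm_inv, Real.norm_of_nonneg hD.le,
    (pow_left_inj₀ (norm_nonneg _) hD.le two_ne_zero).1 hsq, inv_mul_cancel₀ hD.ne']

theorem phiMap_zero_left (x : ℝ³) : phiMap 0 x = x := by
  simp [phiMap]

theorem phiMap_inv_norm_smul_self (q : ℝ³) : phiMap q (‖q‖⁻¹ • q) = ‖q‖⁻¹ • q := by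
  rcases eq_or_ne q 0 with rfl | hq
  · simp [phiMap_zero_left]
  have hD : 1 + ‖q‖ ^ 2 + 2 * ‖q‖ ≠ 0 := by positivity
  rw [phiMap, real_inner_smul_right, real_inner_self_eq_norm_sq]
  match_scalars
  field_simp
  ring

theorem phiDenom_smul (a : ℝ) (q x : ℝ³) :
    phiDenom (a • q) x = 1 + a ^ 2 * ‖q‖ ^ 2 + 2 * (a * ⟪q, x⟫) := by
  rw [phiDenom, norm_smul, mul_pow, Real.norm_eq_abs, sq_abs, real_inner_smul_left]

theorem inner_phiMap_smul (b : ℝ) (q x : ℝ³) :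
    ⟪q, phiMap (b • q) x⟫ = (phiDenom (b • q) x)⁻¹ *
      ((1 - b ^ 2 * ‖q‖ ^ 2) * ⟪q, x⟫ + 2 * (1 + b * ⟪q, x⟫) * b * ‖q‖ ^ 2) := by
  rw [phiMap_eq, real_inner_smul_right, inner_add_right, real_inner_smul_right,
    real_inner_smul_right, real_inner_smul_right, real_inner_self_eq_norm_sq, norm_smul, mul_pow,
    Real.norm_eq_abs, sq_abs, real_inner_smul_left]
  ring

theorem phiDenom_smul_phiMap_smul (a b : ℝ) (hb : phiDenom (b • q) x ≠ 0)
    (hab : 1 + a * b * ‖q‖ ^ 2 ≠ 0) :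
    phiDenom (a • q) (phiMap (b • q) x) * phiDenom (b • q) x =
      (1 + a * b * ‖q‖ ^ 2) ^ 2 * phiDenom (((a + b) / (1 + a * b * ‖q‖ ^ 2)) • q) x := by
  have hDb := phiDenom_smul b q x
  rw [phiDenom_smul a, inner_phiMap_smul]
  generalize phiDenom (b • q) x = Db at *
  rw [phiDenom_smul]
  generalize ‖q‖ ^ 2 = s at *
  generalize ⟪q, x⟫ = t at *
  rw [mul_right_comm] at hab
  field_simp
  subst hDb
  ring

theorem phiMap_smul_phiMap_smul (a b : ℝ) (hb : phiDenom (b • q) x ≠ 0)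
    (hab : 1 + a * b * ‖q‖ ^ 2 ≠ 0) :
    phiMap (a • q) (phiMap (b • q) x) = phiMap (((a + b) / (1 + a * b * ‖q‖ ^ 2)) • q) x := by
  have hcocycle := phiDenom_smul_phiMap_smul a b hb hab
  rcases eq_or_ne (phiDenom (((a + b) / (1 + a * b * ‖q‖ ^ 2)) • q) x) 0 with hc | hc
  · -- both sides are `0⁻¹ • _ = 0`
    rw [hc, mul_zero, mul_eq_zero, or_iff_left hb] at hcocycle
    rw [phiMap_eq (a • q), hcocycle, inv_zero, zero_smul, phiMap_eq, hc, inv_zero, zero_smul]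
  rw [phiMap_eq (a • q), eq_div_of_mul_eq hb hcocycle, real_inner_smul_left, inner_phiMap_smul,
    phiMap_eq (b • q), phiMap_eq _ x]
  have hDb := phiDenom_smul b q x
  simp only [norm_smul, mul_pow, Real.norm_eq_abs, sq_abs, real_inner_smul_left]
  generalize phiDenom (b • q) x = Db at *
  generalize ‖q‖ ^ 2 = s at *
  generalize ⟪q, x⟫ = t at *
  match_scalars <;> field_simp <;> subst hDb <;> ring

theorem phiMap_smul_comm {a b : ℝ} (hx : ‖x‖ = 1) (ha : ‖a • q‖ < 1) (hb : ‖b • q‖ < 1) :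
    phiMap (a • q) (phiMap (b • q) x) = phiMap (b • q) (phiMap (a • q) x) := by
  have hab : 0 < 1 + a * b * ‖q‖ ^ 2 := by
    have := one_add_inner_pos ha hb.le
    rw [real_inner_smul_left, real_inner_smul_right, real_inner_self_eq_norm_sq] at this
    linarith
  rw [phiMap_smul_phiMap_smul a b (phiDenom_pos hb hx).ne' hab.ne',
    phiMap_smul_phiMap_smul b a (phiDenom_pos ha hx).ne' (by rw [mul_comm b a]; exact hab.ne'),
    add_comm b a, mul_comm b a]

theorem mem_span_singleton_of_phiMap_eq_self {y : ℝ³} (hq0 : q ≠ 0) (hq : ‖q‖ < 1)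
    (hy : ‖y‖ = 1) (h : phiMap q y = y) : y ∈ ℝ ∙ q := by
  have ht := one_add_inner_pos hq hy.le
  rw [phiMap_eq, inv_smul_eq_iff₀ (phiDenom_pos hq hy).ne', phiDenom] at h
  have key : (2 * (1 + ⟪q, y⟫)) • q = (2 * (‖q‖ ^ 2 + ⟪q, y⟫)) • y := by
    linear_combination (norm := module) h
  have hst : 2 * (‖q‖ ^ 2 + ⟪q, y⟫) ≠ 0 := by
    intro h0
    rw [h0, zero_smul, smul_eq_zero] at key
    exact hq0 (key.resolve_left (mul_pos two_pos ht).ne')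
  rw [← Submodule.smul_mem_iff _ hst, ← key]
  exact Submodule.smul_mem _ _ (Submodule.mem_span_singleton_self q)

theorem mem_span_pair_phiMap (hD : phiDenom q x ≠ 0) (h : 1 + ⟪q, x⟫ ≠ 0) :
    q ∈ Submodule.span ℝ {x, phiMap q x} := by
  have key : (2 * (1 + ⟪q, x⟫)) • q = phiDenom q x • phiMap q x - (1 - ‖q‖ ^ 2) • x := by
    rw [phiMap_eq, smul_inv_smul₀ hD]
    abel
  rw [← Submodule.smul_mem_iff _ (mul_ne_zero two_ne_zero h), key]
  exact sub_mem (Submodule.smul_mem _ _ (Submodule.subset_span (by simp)))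
    (Submodule.smul_mem _ _ (Submodule.subset_span (by simp)))

end

theorem cross_eq_zero_iff_mem_span_singleton {p q : ℝ³} (hq : q ≠ 0) :
    crossProduct (p : Fin 3 → ℝ) (q : Fin 3 → ℝ) = 0 ↔ p ∈ ℝ ∙ q := by
  rw [← neg_eq_zero, cross_anticomm, ← not_iff_not, ← Ne,
    crossProduct_ne_zero_iff_linearIndependent, LinearIndependent.pair_iff' (by simpa using hq),
    Submodule.mem_span_singleton]
  push Not
  exact forall_congr' fun a => (WithLp.ofLp_injective 2).ne_iff

theorem phi_commute_iff_parallel (p q : EuclideanSpace ℝ (Fin 3))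
    (hp : ‖p‖ < 1) (hq : ‖q‖ < 1) :
    (∀ x : EuclideanSpace ℝ (Fin 3), ‖x‖ = 1 →
      phiMap p (phiMap q x) = phiMap q (phiMap p x)) ↔
    crossProduct (p : Fin 3 → ℝ) (q : Fin 3 → ℝ) = 0 := by
  rcases eq_or_ne q 0 with rfl | hq0
  · simp [phiMap_zero_left]
  rw [cross_eq_zero_iff_mem_span_singleton hq0]
  constructor
  · intro hcomm
    set e := ‖q‖⁻¹ • q
    have he : ‖e‖ = 1 := norm_smul_inv_norm hq0
    have hfix : phiMap q (phiMap p e) = phiMap p e := by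
      rw [← hcomm e he, phiMap_inv_norm_smul_self]
    have hspan : Submodule.span ℝ {e, phiMap p e} ≤ ℝ ∙ q := by
      rw [Submodule.span_le, Set.insert_subset_iff, Set.singleton_subset_iff]
      exact ⟨Submodule.smul_mem _ _ (Submodule.mem_span_singleton_self q),
        mem_span_singleton_of_phiMap_eq_self hq0 hq (norm_phiMap_s15 hp he) hfix⟩
    exact hspan (mem_span_pair_phiMap (phiDenom_pos hp he).ne' (one_add_inner_pos hp he.le).ne')
  · rintro hpq x hx
    obtain ⟨c, rfl⟩ := Submodule.mem_span_singleton.1 hpq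
    simpa only [one_smul] using phiMap_smul_comm (b := 1) hx hp (by rwa [one_smul])
end
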